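/- arXiv:1203.5053 — 2 statements merged into one kernel-verified Lean document; each statement's English description precedes it below -/
import Mathlib

section
/- The number of shuffle surjections from {1,…,n} onto {1,…,k} with block sizes m_1,…,m_k (i.e. |φ^{-1}(i)| = m_i) equals m_1 m_2 ⋯ m_k / ((m_1+⋯+m_k)(m_2+⋯+m_k)⋯m_k) · (m_1+⋯+m_k)! / (m_1! m_2! ⋯ m_k!), where m_1 + ⋯ + m_k = n. -/
open Nat Finset

def SS (n k : ℕ) (m : Fin k → ℕ) : Finset (Fin n → Fin k) :=
  Finset.univ.filter (fun f => Function.Surjective f ∧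
    (∀ i : Fin k, (Finset.univ.filter (fun a => f a = i)).card = m i) ∧
    (∀ i j : Fin k, i < j →
      (Finset.univ.filter (fun a => f a = i)).min <
        (Finset.univ.filter (fun a => f a = j)).min))

lemma mem_SS {n k : ℕ} {m : Fin k → ℕ} {f : Fin n → Fin k} :
    f ∈ SS n k m ↔ Function.Surjective f ∧
    (∀ i : Fin k, (Finset.univ.filter (fun a => f a = i)).card = m i) ∧
    (∀ i j : Fin k, i < j →
      (Finset.univ.filter (fun a => f a = i)).min <
        (Finset.univ.filter (fun a => f a = j)).min) := by
  simp [SS]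

lemma surj_of_fibers {n k : ℕ} {m : Fin k → ℕ} (hm : ∀ i, 1 ≤ m i) (f : Fin n → Fin k)
    (hf : ∀ i : Fin k, (Finset.univ.filter (fun a => f a = i)).card = m i) :
    Function.Surjective f := by
  intro i
  have : 0 < (Finset.univ.filter (fun a => f a = i)).card := by
    rw [hf i]; exact hm i
  obtain ⟨a, ha⟩ := Finset.card_pos.mp this
  simp only [mem_filter] at ha
  exact ⟨a, ha.2⟩

lemma min_lt_min_iff {α : Type*} [LinearOrder α] {s t : Finset α} (hs : s.Nonempty)
    (ht : t.Nonempty) : s.min < t.min ↔ s.min' hs < t.min' ht := by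
  rw [← Finset.coe_min' hs, ← Finset.coe_min' ht, WithTop.coe_lt_coe]

lemma min'_eq_emb {α β : Type*} [LinearOrder α] [LinearOrder β] (f : α ↪o β) {s : Finset α}
    {t : Finset β} (h : ∀ b, b ∈ t ↔ ∃ a ∈ s, f a = b) (hs : s.Nonempty) (ht : t.Nonempty) :
    t.min' ht = f (s.min' hs) := by
  apply le_antisymm
  · exact Finset.min'_le _ _ ((h _).mpr ⟨s.min' hs, s.min'_mem hs, rfl⟩)
  · apply Finset.le_min'
    intro b hb
    obtain ⟨a, ha, rfl⟩ := (h b).mp hb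
    exact f.monotone (Finset.min'_le _ _ ha)

theorem card_SS_succ (n k : ℕ) (m : Fin (k+1) → ℕ) (hm : ∀ i, 1 ≤ m i)
    (hsum : ∑ i, m i = n) :
    (SS n (k+1) m).card
      = (n-1).choose (m 0 - 1) * (SS (n - m 0) k (m ∘ Fin.succ)).card := by
  classical
  have hm0n : m 0 ≤ n := hsum ▸ Finset.single_le_sum (fun i _ => Nat.zero_le _) (mem_univ 0)
  have hn : 0 < n := lt_of_lt_of_le (hm 0) hm0n
  set z : Fin n := ⟨0, hn⟩ with hz
  have hzbot : ∀ a : Fin n, z ≤ a := fun a => by simp [hz, Fin.le_def]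
  set 𝒜 : Finset (Finset (Fin n)) :=
    (Finset.univ.powersetCard (m 0)).filter (fun A => z ∈ A) with h𝒜
  -- Step 1: fiberwise decomposition
  have hstep1 : (SS n (k+1) m).card = ∑ A ∈ 𝒜,
      ((SS n (k+1) m).filter
        (fun f => Finset.univ.filter (fun a => f a = 0) = A)).card := by
    apply Finset.card_eq_sum_card_fiberwise
    intro f hf
    rw [Finset.mem_coe, mem_SS] at hf
    obtain ⟨hsurj, hcard, hmin⟩ := hf
    have hfz : f z = 0 := by
      by_contra hne
      have hpos : (0 : Fin (k+1)) < f z := Fin.pos_iff_ne_zero.mpr hne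
      have h1 := hmin 0 (f z) hpos
      have h2 : (Finset.univ.filter (fun a => f a = f z)).min ≤ (z : WithTop (Fin n)) :=
        Finset.min_le (by simp)
      have hne0 : (Finset.univ.filter (fun a => f a = (0:Fin (k+1)))).Nonempty := by
        rw [← Finset.card_pos, hcard 0]; exact hm 0
      obtain ⟨a, ha⟩ := hne0
      have h3 : ((z : Fin n) : WithTop (Fin n)) ≤
          (Finset.univ.filter (fun a => f a = (0:Fin (k+1)))).min := by
        apply Finset.le_min
        intro b hb
        exact WithTop.coe_le_coe.mpr (hzbot b)
      exact absurd (lt_of_le_of_lt h3 (lt_of_lt_of_le h1 h2)) (lt_irrefl _)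
    simp only [Finset.mem_coe, h𝒜, mem_filter, mem_powersetCard]
    exact ⟨⟨Finset.subset_univ _, hcard 0⟩, by simp [hfz]⟩
  -- Step 2: each fiber has the same cardinality
  have hstep2 : ∀ A ∈ 𝒜, ((SS n (k+1) m).filter
      (fun f => Finset.univ.filter (fun a => f a = 0) = A)).card
      = (SS (n - m 0) k (m ∘ Fin.succ)).card := by
    intro A hA
    simp only [h𝒜, mem_filter, mem_powersetCard] at hA
    obtain ⟨⟨-, hAcard⟩, hzA⟩ := hA
    have hscard : (Aᶜ).card = n - m 0 := by
      rw [Finset.card_compl, Fintype.card_fin, hAcard]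
    set e : Fin (n - m 0) ↪o Fin n := (Aᶜ).orderEmbOfFin hscard with he
    have hes : ∀ x, e x ∈ Aᶜ := fun x => Finset.orderEmbOfFin_mem _ _ _
    set E := (Aᶜ).orderIsoOfFin hscard with hE
    have heE : ∀ x, (E x : Fin n) = e x := fun x => Finset.coe_orderIsoOfFin_apply _ _ _
    have hEsymm : ∀ (x : Fin (n - m 0)) (h : e x ∈ Aᶜ), E.symm ⟨e x, h⟩ = x := by
      intro x h
      have : (⟨e x, h⟩ : {a // a ∈ Aᶜ}) = E x := Subtype.ext (heE x).symm
      rw [this, OrderIso.symm_apply_apply]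
    have hecover : ∀ a ∈ Aᶜ, ∃ x, e x = a := by
      intro a ha
      exact ⟨E.symm ⟨a, ha⟩, by rw [← heE, OrderIso.apply_symm_apply]⟩
    -- the T set
    set T := (SS n (k+1) m).filter
      (fun f => Finset.univ.filter (fun a => f a = 0) = A) with hT
    have hmemT : ∀ f, f ∈ T ↔ f ∈ SS n (k+1) m ∧
        Finset.univ.filter (fun a => f a = 0) = A := by
      intro f; simp [hT]
    have hfA : ∀ f, f ∈ T → ∀ a : Fin n, (f a = 0 ↔ a ∈ A) := by
      intro f hf a
      rw [← ((hmemT f).mp hf).2]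
      simp
    have hne : ∀ f, f ∈ T → ∀ x : Fin (n - m 0), f (e x) ≠ 0 := by
      intro f hf x h0
      exact absurd ((hfA f hf (e x)).mp h0) (Finset.mem_compl.mp (hes x))
    -- the backward map
    set Ψ : (Fin (n - m 0) → Fin k) → (Fin n → Fin (k+1)) :=
      fun g a => if ha : a ∈ Aᶜ then (g (E.symm ⟨a, ha⟩)).succ else 0 with hΨ
    -- fiber correspondence for f ∈ T
    have hfib : ∀ f, f ∈ T → ∀ i : Fin k,
        Finset.univ.filter (fun a : Fin n => f a = i.succ)
          = (Finset.univ.filter (fun x : Fin (n - m 0) => f (e x) = i.succ)).image e := by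
      intro f hf i
      ext a
      simp only [mem_filter, mem_univ, true_and, Finset.mem_image]
      constructor
      · intro hfa
        have haA : a ∈ Aᶜ := by
          rw [Finset.mem_compl]
          intro haA
          have := (hfA f hf a).mpr haA
          rw [hfa] at this
          exact Fin.succ_ne_zero i this
        obtain ⟨x, hx⟩ := hecover a haA
        exact ⟨x, by rw [hx]; exact hfa, hx⟩
      · rintro ⟨x, hx, rfl⟩
        exact hx
    -- fiber correspondence for Ψ g
    have hfibΨ : ∀ g : Fin (n - m 0) → Fin k, ∀ i : Fin k,
        Finset.univ.filter (fun a : Fin n => Ψ g a = i.succ)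
          = (Finset.univ.filter (fun x : Fin (n - m 0) => g x = i)).image e := by
      intro g i
      ext a
      simp only [mem_filter, mem_univ, true_and, Finset.mem_image, hΨ]
      constructor
      · intro hfa
        by_cases ha : a ∈ Aᶜ
        · rw [dif_pos ha] at hfa
          obtain ⟨x, hx⟩ := hecover a ha
          refine ⟨x, ?_, hx⟩
          have : E.symm ⟨a, ha⟩ = x := by
            subst hx; exact hEsymm x ha
          rw [this] at hfa
          exact Fin.succ_injective _ hfa
        · rw [dif_neg ha] at hfa
          exact absurd hfa.symm (Fin.succ_ne_zero i)
      · rintro ⟨x, hx, rfl⟩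
        rw [dif_pos (hes x), hEsymm x (hes x), hx]
    have hfibΨ0 : ∀ g : Fin (n - m 0) → Fin k,
        Finset.univ.filter (fun a : Fin n => Ψ g a = 0) = A := by
      intro g
      ext a
      simp only [mem_filter, mem_univ, true_and, hΨ]
      by_cases ha : a ∈ Aᶜ
      · rw [dif_pos ha]
        simp [Fin.succ_ne_zero, Finset.mem_compl.mp ha]
      · rw [dif_neg ha]
        simp [Finset.notMem_compl.mp ha]
    -- pointwise versions of fiber correspondences
    have heEs : ∀ (a : Fin n) (ha : a ∈ Aᶜ), e (E.symm ⟨a, ha⟩) = a := by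
      intro a ha
      rw [← heE, OrderIso.apply_symm_apply]
    have hfib' : ∀ f, f ∈ T → ∀ (i : Fin k) (b : Fin n),
        b ∈ Finset.univ.filter (fun a => f a = i.succ) ↔
          ∃ x ∈ Finset.univ.filter (fun x : Fin (n - m 0) => f (e x) = i.succ), e x = b := by
      intro f hf i b
      rw [hfib f hf i]
      exact Finset.mem_image
    have hfibΨ' : ∀ (g : Fin (n - m 0) → Fin k) (i : Fin k) (b : Fin n),
        b ∈ Finset.univ.filter (fun a => Ψ g a = i.succ) ↔
          ∃ x ∈ Finset.univ.filter (fun x : Fin (n - m 0) => g x = i), e x = b := by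
      intro g i b
      rw [hfibΨ g i]
      exact Finset.mem_image
    -- fiber sizes for f ∈ T
    have hSfcard : ∀ f, f ∈ T → ∀ i : Fin k,
        (Finset.univ.filter (fun x : Fin (n - m 0) => f (e x) = i.succ)).card = m i.succ := by
      intro f hf i
      have h1 := ((hmemT f).mp hf).1
      rw [mem_SS] at h1
      have h2 := h1.2.1 i.succ
      rw [hfib f hf i, Finset.card_image_of_injective _ e.injective] at h2
      exact h2
    have hgcard : ∀ g : Fin (n - m 0) → Fin k, g ∈ SS (n - m 0) k (m ∘ Fin.succ) →
        ∀ i : Fin k, (Finset.univ.filter (fun x => g x = i)).card = m i.succ := by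
      intro g hg i
      exact (mem_SS.mp hg).2.1 i
    -- pred fibers
    have hpredfib : ∀ f (hf : f ∈ T) (i : Fin k),
        Finset.univ.filter (fun x : Fin (n - m 0) => (f (e x)).pred (hne f hf x) = i)
          = Finset.univ.filter (fun x : Fin (n - m 0) => f (e x) = i.succ) := by
      intro f hf i
      ext x
      simp only [mem_filter, mem_univ, true_and]
      constructor
      · intro h
        rw [← h, Fin.succ_pred]
      · intro h
        apply Fin.succ_injective
        rw [Fin.succ_pred, h]
    apply Finset.card_bij' (fun f hf => fun x => (f (e x)).pred (hne f hf x))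
      (fun g _ => Ψ g)
    -- forward membership
    · intro f hf
      rw [mem_SS]
      have hsz : ∀ i : Fin k,
          (Finset.univ.filter (fun x => (f (e x)).pred (hne f hf x) = i)).card
            = (m ∘ Fin.succ) i := by
        intro i
        rw [hpredfib f hf i]
        exact hSfcard f hf i
      refine ⟨surj_of_fibers (fun i => hm i.succ) _ hsz, hsz, ?_⟩
      intro i j hij
      have hf1 := ((hmemT f).mp hf).1
      rw [mem_SS] at hf1
      have hmin := hf1.2.2 i.succ j.succ (Fin.succ_lt_succ_iff.mpr hij)
      have hne1 : (Finset.univ.filter (fun a => f a = i.succ)).Nonempty := by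
        rw [← Finset.card_pos, hf1.2.1 i.succ]; exact hm _
      have hne2 : (Finset.univ.filter (fun a => f a = j.succ)).Nonempty := by
        rw [← Finset.card_pos, hf1.2.1 j.succ]; exact hm _
      have hne1' : (Finset.univ.filter (fun x : Fin (n - m 0) => f (e x) = i.succ)).Nonempty := by
        rw [← Finset.card_pos, hSfcard f hf i]; exact hm _
      have hne2' : (Finset.univ.filter (fun x : Fin (n - m 0) => f (e x) = j.succ)).Nonempty := by
        rw [← Finset.card_pos, hSfcard f hf j]; exact hm _
      rw [min_lt_min_iff hne1 hne2] at hmin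
      rw [min'_eq_emb e (hfib' f hf i) hne1' hne1, min'_eq_emb e (hfib' f hf j) hne2' hne2,
        e.lt_iff_lt] at hmin
      rw [hpredfib f hf i, hpredfib f hf j, min_lt_min_iff hne1' hne2']
      exact hmin
    -- left inverse
    · intro f hf
      funext a
      by_cases ha : a ∈ Aᶜ
      · simp only [hΨ]
        rw [dif_pos ha, Fin.succ_pred, heEs a ha]
      · simp only [hΨ]
        rw [dif_neg ha]
        exact ((hfA f hf a).mpr (Finset.notMem_compl.mp ha)).symm
    -- right inverse
    · intro g hg
      funext x
      have h1 : Ψ g (e x) = (g x).succ := by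
        simp only [hΨ]
        rw [dif_pos (hes x), hEsymm x (hes x)]
      apply Fin.succ_injective
      rw [Fin.succ_pred, h1]
    -- backward membership
    · intro g hg
      rw [hmemT]
      refine ⟨?_, hfibΨ0 g⟩
      rw [mem_SS]
      have hsz : ∀ i : Fin (k+1),
          (Finset.univ.filter (fun a => Ψ g a = i)).card = m i := by
        intro i
        by_cases hi0 : i = 0
        · subst hi0
          rw [hfibΨ0 g, hAcard]
        · obtain ⟨i', rfl⟩ := Fin.eq_succ_of_ne_zero hi0
          rw [hfibΨ g i', Finset.card_image_of_injective _ e.injective]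
          exact hgcard g hg i'
      refine ⟨surj_of_fibers hm _ hsz, hsz, ?_⟩
      intro i j hij
      have hj0 : j ≠ 0 := by
        intro h; subst h
        exact absurd (lt_of_le_of_lt (Fin.zero_le i) hij) (lt_irrefl _)
      obtain ⟨j', rfl⟩ := Fin.eq_succ_of_ne_zero hj0
      have hnej : (Finset.univ.filter (fun a => Ψ g a = j'.succ)).Nonempty := by
        rw [← Finset.card_pos, hsz j'.succ]; exact hm _
      have hnej' : (Finset.univ.filter (fun x : Fin (n - m 0) => g x = j')).Nonempty := by
        rw [← Finset.card_pos, hgcard g hg j']; exact hm _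
      have htj := min'_eq_emb e (hfibΨ' g j') hnej' hnej
      by_cases hi0 : i = 0
      · subst hi0
        have hne0 : (Finset.univ.filter (fun a => Ψ g a = (0 : Fin (k+1)))).Nonempty := by
          rw [hfibΨ0 g]; exact ⟨z, hzA⟩
        rw [min_lt_min_iff hne0 hnej]
        have hmin0 : (Finset.univ.filter (fun a => Ψ g a = (0 : Fin (k+1)))).min' hne0 ≤ z := by
          apply Finset.min'_le
          rw [hfibΨ0 g]; exact hzA
        have hminj : z < (Finset.univ.filter (fun a => Ψ g a = j'.succ)).min' hnej := by
          rw [htj]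
          refine lt_of_le_of_ne (hzbot _) ?_
          intro hcontra
          have hmem : e ((Finset.univ.filter
              (fun x : Fin (n - m 0) => g x = j')).min' hnej') ∈ Aᶜ := hes _
          rw [← hcontra] at hmem
          exact (Finset.mem_compl.mp hmem) hzA
        exact lt_of_le_of_lt hmin0 hminj
      · obtain ⟨i', rfl⟩ := Fin.eq_succ_of_ne_zero hi0
        have hnei : (Finset.univ.filter (fun a => Ψ g a = i'.succ)).Nonempty := by
          rw [← Finset.card_pos, hsz i'.succ]; exact hm _
        have hnei' : (Finset.univ.filter (fun x : Fin (n - m 0) => g x = i')).Nonempty := by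
          rw [← Finset.card_pos, hgcard g hg i']; exact hm _
        have hti := min'_eq_emb e (hfibΨ' g i') hnei' hnei
        have hgmin := (mem_SS.mp hg).2.2 i' j' (Fin.succ_lt_succ_iff.mp hij)
        rw [min_lt_min_iff hnei' hnej'] at hgmin
        rw [min_lt_min_iff hnei hnej, hti, htj, e.lt_iff_lt]
        exact hgmin
  rw [hstep1, Finset.sum_congr rfl hstep2, Finset.sum_const, smul_eq_mul]
  congr 1
  -- card 𝒜
  have h1 : (Finset.univ.erase z).card = n - 1 := by
    rw [Finset.card_erase_of_mem (mem_univ z), Finset.card_univ, Fintype.card_fin]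
  rw [← h1, ← Finset.card_powersetCard]
  apply Finset.card_bij' (fun A _ => A.erase z) (fun B _ => insert z B)
  · intro A hA
    simp only [h𝒜, mem_filter] at hA
    exact Finset.insert_erase hA.2
  · intro B hB
    simp only [mem_powersetCard] at hB
    exact Finset.erase_insert (fun h => (Finset.mem_erase.mp (hB.1 h)).1 rfl)
  · intro A hA
    simp only [h𝒜, mem_filter, mem_powersetCard] at hA
    simp only [mem_powersetCard]
    exact ⟨Finset.erase_subset_erase z (Finset.subset_univ A),
      by rw [Finset.card_erase_of_mem hA.2, hA.1.2]⟩
  · intro B hB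
    simp only [mem_powersetCard] at hB
    have hzB : z ∉ B := fun h => (Finset.mem_erase.mp (hB.1 h)).1 rfl
    simp only [h𝒜, mem_filter, mem_powersetCard]
    refine ⟨⟨Finset.subset_univ _, ?_⟩, Finset.mem_insert_self z B⟩
    rw [Finset.card_insert_of_notMem hzB, hB.2]
    exact Nat.succ_pred_eq_of_pos (hm 0)

lemma key2' {a b : ℕ} (h1 : 1 ≤ a) (h2 : a ≤ b) :
    (b-1).choose (a - 1) * a ! * (b - a)! = a * (b-1)! := by
  have h3 : a - 1 ≤ b - 1 := by omega
  have h4 := Nat.choose_mul_factorial_mul_factorial h3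
  have hfac : a ! = a * (a - 1)! := by
    conv_lhs => rw [show a = (a - 1) + 1 by omega]
    rw [Nat.factorial_succ]
    congr 1; omega
  have hnm : b - a = (b - 1) - (a - 1) := by omega
  rw [hfac, hnm]
  calc (b-1).choose (a - 1) * (a * (a - 1)!) * ((b-1) - (a-1))!
      = a * ((b-1).choose (a - 1) * (a - 1)! * ((b-1) - (a -1))!) := by ring
    _ = a * (b-1)! := by rw [h4]

theorem key (k : ℕ) : ∀ (n : ℕ) (m : Fin k → ℕ), (∀ i, 1 ≤ m i) → ∑ i, m i = n →
    (SS n k m).card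
      * (∏ i : Fin k, ∑ j ∈ Finset.univ.filter (fun j => i ≤ j), m j)
      * (∏ i : Fin k, (m i)!)
    = (∏ i : Fin k, m i) * n ! := by
  induction k with
  | zero =>
    intro n m hm hsum
    simp at hsum
    subst hsum
    have h1 : SS 0 0 m = Finset.univ := by
      ext f
      simp only [SS, mem_filter, mem_univ, true_and, iff_true]
      exact ⟨fun b => b.elim0, fun i => i.elim0, fun i => i.elim0⟩
    simp [h1]
  | succ k ih =>
    intro n m hm hsum
    have hm0n : m 0 ≤ n := hsum ▸ Finset.single_le_sum (fun i _ => Nat.zero_le _) (mem_univ 0)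
    have hn : 0 < n := lt_of_lt_of_le (hm 0) hm0n
    -- suffix sums reindex
    have hfil : ∀ i : Fin k, (Finset.univ.filter (fun j => i.succ ≤ j))
        = (Finset.univ.filter (fun j => i ≤ j)).image Fin.succ := by
      intro i
      ext j
      simp only [mem_filter, mem_univ, true_and, mem_image]
      constructor
      · intro hj
        have hj0 : j ≠ 0 := by
          intro h; subst h
          exact absurd hj (by simp [Fin.le_def])
        obtain ⟨j', rfl⟩ := Fin.eq_succ_of_ne_zero hj0
        exact ⟨j', Fin.succ_le_succ_iff.mp hj, rfl⟩
      · rintro ⟨j', hj', rfl⟩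
        exact Fin.succ_le_succ_iff.mpr hj'
    have hsuffix : (∏ i : Fin (k+1), ∑ j ∈ Finset.univ.filter (fun j => i ≤ j), m j)
        = n * ∏ i : Fin k, ∑ j ∈ Finset.univ.filter (fun j => i ≤ j), (m ∘ Fin.succ) j := by
      rw [Fin.prod_univ_succ]
      congr 1
      · rw [← hsum]
        congr 1
        ext j; simp [Fin.zero_le]
      · refine Finset.prod_congr rfl fun i _ => ?_
        rw [hfil i, Finset.sum_image (fun a _ b _ h => Fin.succ_injective _ h)]
        rfl
    have hsum' : ∑ i : Fin k, (m ∘ Fin.succ) i = n - m 0 := by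
      have h2 := Fin.sum_univ_succ m
      rw [hsum] at h2
      simp only [Function.comp_apply]
      omega
    have := ih (n - m 0) (m ∘ Fin.succ) (fun i => hm _) hsum'
    rw [card_SS_succ n k m hm hsum, hsuffix, Fin.prod_univ_succ (fun i => (m i)!),
      Fin.prod_univ_succ m]
    -- arithmetic
    have key2 : (n-1).choose (m 0 - 1) * (m 0)! * (n - m 0)! = m 0 * (n-1)! :=
      key2' (hm 0) hm0n
    have hnfac : n ! = n * (n-1)! := (Nat.mul_factorial_pred hn.ne').symm
    calc (n-1).choose (m 0 - 1) * (SS (n - m 0) k (m ∘ Fin.succ)).card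
          * (n * ∏ i : Fin k, ∑ j ∈ Finset.univ.filter (fun j => i ≤ j), (m ∘ Fin.succ) j)
          * ((m 0)! * ∏ i : Fin k, (m i.succ)!)
        = (n * ((n-1).choose (m 0 - 1) * (m 0)!)) *
          ((SS (n - m 0) k (m ∘ Fin.succ)).card
            * (∏ i : Fin k, ∑ j ∈ Finset.univ.filter (fun j => i ≤ j), (m ∘ Fin.succ) j)
            * (∏ i : Fin k, ((m ∘ Fin.succ) i)!)) := by simp only [Function.comp]; ring
      _ = (n * ((n-1).choose (m 0 - 1) * (m 0)!)) * ((∏ i : Fin k, (m ∘ Fin.succ) i) * (n - m 0)!) := by rw [this]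
      _ = m 0 * (∏ i : Fin k, m i.succ) * n ! := by
          rw [hnfac]
          have : n * ((n-1).choose (m 0 - 1) * (m 0)!) * ((∏ i : Fin k, (m ∘ Fin.succ) i) * (n - m 0)!)
              = ((n-1).choose (m 0 - 1) * (m 0)! * (n - m 0)!) * n * (∏ i : Fin k, (m ∘ Fin.succ) i) := by ring
          rw [this, key2]
          simp only [Function.comp]
          ring


/-- The number of shuffle surjections `f : {1,…,n} ↠ {1,…,k}` with block sizes
`|f⁻¹(i)| = m i` equals
`m_1 ⋯ m_k / ((m_1+⋯+m_k)(m_2+⋯+m_k)⋯m_k) · n! / (m_1! ⋯ m_k!)`,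
stated here in the denominator-free form. A shuffle surjection is a surjection
with `min f⁻¹(i) < min f⁻¹(j)` whenever `i < j`. -/
theorem shuffle_surjection_count (n k : ℕ) (m : Fin k → ℕ) (hm : ∀ i, 1 ≤ m i)
    (hsum : ∑ i, m i = n) :
    {f : Fin n → Fin k |
        Function.Surjective f ∧
        (∀ i : Fin k, (Finset.univ.filter (fun a => f a = i)).card = m i) ∧
        (∀ i j : Fin k, i < j →
          (Finset.univ.filter (fun a => f a = i)).min <
            (Finset.univ.filter (fun a => f a = j)).min)}.ncard
      * (∏ i : Fin k, ∑ j ∈ Finset.univ.filter (fun j => i ≤ j), m j)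
      * (∏ i : Fin k, (m i)!)
    = (∏ i : Fin k, m i) * n ! := by
  have hset : {f : Fin n → Fin k |
        Function.Surjective f ∧
        (∀ i : Fin k, (Finset.univ.filter (fun a => f a = i)).card = m i) ∧
        (∀ i j : Fin k, i < j →
          (Finset.univ.filter (fun a => f a = i)).min <
            (Finset.univ.filter (fun a => f a = j)).min)} = ↑(SS n k m) := by
    ext f
    rw [Set.mem_setOf_eq, Finset.mem_coe, mem_SS]
  rw [hset, Set.ncard_coe_finset]
  exact key k n m hm hsum
end

section
/- In a noncommutative Rota–Baxter algebra of weight λ, for all elements a₁, a₂, a₃ the element P(P(a₁·P(a₂))·a₃) + λP(P(a₁·a₂)·a₃) − P((P(a₁)·P(a₂))·a₃) − P((P(a₁)·a₂)·P(a₃)) − λP((P(a₁)·a₂)·a₃) + P(P(a₁)·a₂)·P(a₃) equals zero; i.e. the S-polynomial arising from the overlap P(P(P(a₁)·a₂)·a₃) of the Rota–Baxter relation with itself reduces to zero modulo the defining relations. -/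
/-- In a noncommutative Rota–Baxter algebra of weight `λ` over a field `k`, the
S-polynomial arising from the overlap `P(P(P(a₁)·a₂)·a₃)` of the Rota–Baxter relation
with itself reduces to zero:
`P(P(a₁·P(a₂))·a₃) + λP(P(a₁·a₂)·a₃) − P((P(a₁)·P(a₂))·a₃) − P((P(a₁)·a₂)·P(a₃))
 − λP((P(a₁)·a₂)·a₃) + P(P(a₁)·a₂)·P(a₃) = 0`. -/
theorem ncRB_S_polynomial_reduces {k A : Type*} [Field k] [NonUnitalRing A]
    [Module k A] [SMulCommClass k A A] [IsScalarTower k A A]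
    (P : A →ₗ[k] A) (lam : k)
    (hRB : ∀ a b : A, P a * P b = P (P a * b + a * P b + lam • (a * b))) :
    ∀ a₁ a₂ a₃ : A,
      P (P (a₁ * P a₂) * a₃) + lam • P (P (a₁ * a₂) * a₃)
        - P ((P a₁ * P a₂) * a₃) - P ((P a₁ * a₂) * P a₃)
        - lam • P ((P a₁ * a₂) * a₃) + P (P a₁ * a₂) * P a₃ = 0 := by
  intro a₁ a₂ a₃
  rw [hRB a₁ a₂, hRB (P a₁ * a₂) a₃]
  simp only [map_add, map_smul, add_mul, smul_mul_assoc]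
  abel
end
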